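/- arXiv:2509.15597 — 2 statements merged into one kernel-verified Lean document; each statement's English description precedes it below -/
import Mathlib

section
/- Let (Ω, 𝓕, P) be a probability space with a filtration (𝓕_k)_{k≥0}, and let (V_k), (u_k), (β_k), (α_k) be sequences of nonnegative real-valued random variables such that V_k, u_k, β_k, α_k are 𝓕_k-measurable for every k. Suppose that almost surely Σ_{k=0}^∞ u_k < ∞ and Σ_{k=0}^∞ β_k < ∞, and that for every k ≥ 0, E[V_{k+1} | 𝓕_k] ≤ (1 + u_k) V_k − α_k + β_k almost surely. Then almost surely the sequence (V_k) converges to a finite limit and Σ_{k=0}^∞ α_k < ∞. -/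
open MeasureTheory Filter

/-- **Robbins–Siegmund supermartingale convergence lemma.**
Let `(Ω, 𝓕, P)` be a probability space with a filtration `(𝓕 k)`, and let
`V, u, β, α` be sequences of nonnegative, integrable, adapted real random variables.
If almost surely `∑ u k < ∞` and `∑ β k < ∞`, and for every `k`,
`E[V (k+1) | 𝓕 k] ≤ (1 + u k) * V k - α k + β k` almost surely, then almost surely
`V k` converges to a finite limit and `∑ α k < ∞`. -/
theorem robbins_siegmund
    {Ω : Type*} {m0 : MeasurableSpace Ω} {μ : Measure Ω} [IsProbabilityMeasure μ]
    (𝓕 : Filtration ℕ m0)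
    (V u β α : ℕ → Ω → ℝ)
    (hV_meas : ∀ k, StronglyMeasurable[𝓕 k] (V k))
    (hu_meas : ∀ k, StronglyMeasurable[𝓕 k] (u k))
    (hβ_meas : ∀ k, StronglyMeasurable[𝓕 k] (β k))
    (hα_meas : ∀ k, StronglyMeasurable[𝓕 k] (α k))
    (hV_nonneg : ∀ k ω, 0 ≤ V k ω)
    (hu_nonneg : ∀ k ω, 0 ≤ u k ω)
    (hβ_nonneg : ∀ k ω, 0 ≤ β k ω)
    (hα_nonneg : ∀ k ω, 0 ≤ α k ω)
    (hV_int : ∀ k, Integrable (V k) μ)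
    (hu_int : ∀ k, Integrable (u k) μ)
    (hβ_int : ∀ k, Integrable (β k) μ)
    (hα_int : ∀ k, Integrable (α k) μ)
    (hu_sum : ∀ᵐ ω ∂μ, Summable fun k => u k ω)
    (hβ_sum : ∀ᵐ ω ∂μ, Summable fun k => β k ω)
    (hcond : ∀ k, μ[V (k + 1)|𝓕 k] ≤ᵐ[μ] fun ω => (1 + u k ω) * V k ω - α k ω + β k ω) :
    ∀ᵐ ω ∂μ, (∃ l : ℝ, Tendsto (fun k => V k ω) atTop (nhds l)) ∧
      Summable fun k => α k ω := by
  classical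
  -- the compounding product
  set P : ℕ → Ω → ℝ := fun k ω => ∏ j ∈ Finset.range k, (1 + u j ω) with hPdef
  have hPsucc : ∀ k ω, P (k + 1) ω = P k ω * (1 + u k ω) := fun k ω =>
    Finset.prod_range_succ _ _
  have hP0 : ∀ ω, P 0 ω = 1 := fun ω => Finset.prod_range_zero _
  have hP1 : ∀ k ω, 1 ≤ P k ω := by
    intro k ω
    induction k with
    | zero => rw [hP0 ω]
    | succ k ih => rw [hPsucc k ω]; nlinarith [hu_nonneg k ω]
  have hPpos : ∀ k ω, 0 < P k ω := fun k ω => lt_of_lt_of_le one_pos (hP1 k ω)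
  have hPmono : ∀ ω, Monotone fun k => P k ω := fun ω =>
    monotone_nat_of_le_succ fun k => by
      have := hPpos k ω; have := hu_nonneg k ω
      rw [hPsucc]; nlinarith
  have hPle : ∀ k ω, P k ω ≤ Real.exp (∑ j ∈ Finset.range k, u j ω) := by
    intro k ω
    rw [Real.exp_sum]
    exact Finset.prod_le_prod (fun j _ => by linarith [hu_nonneg j ω])
      (fun j _ => by linarith [Real.add_one_le_exp (u j ω)])
  have hPmeas : ∀ k, StronglyMeasurable[𝓕 k] (P k) := by
    intro k
    induction k with
    | zero =>
        have h : P 0 = fun _ => (1 : ℝ) := funext fun ω => hP0 ω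
        rw [h]; exact stronglyMeasurable_const
    | succ k ih =>
        have h : P (k + 1) = fun ω => P k ω * (1 + u k ω) := funext fun ω => hPsucc k ω
        rw [h]
        exact (ih.mono (𝓕.mono k.le_succ)).mul
          (stronglyMeasurable_const.add ((hu_meas k).mono (𝓕.mono k.le_succ)))
  have hPmeas' : ∀ k, StronglyMeasurable[𝓕 k] (P (k + 1)) := by
    intro k
    have h : P (k + 1) = fun ω => P k ω * (1 + u k ω) := funext fun ω => hPsucc k ω
    rw [h]
    exact (hPmeas k).mul (stronglyMeasurable_const.add (hu_meas k))
  -- discounted partial sums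
  set A : ℕ → Ω → ℝ := fun k ω => ∑ j ∈ Finset.range k, α j ω / P (j + 1) ω with hAdef
  set B : ℕ → Ω → ℝ := fun k ω => ∑ j ∈ Finset.range k, β j ω / P (j + 1) ω with hBdef
  have hterm_meas : ∀ (g : ℕ → Ω → ℝ), (∀ k, StronglyMeasurable[𝓕 k] (g k)) → ∀ j,
      StronglyMeasurable[𝓕 j] fun ω => g j ω / P (j + 1) ω := fun g hg j =>
    ((hg j).measurable.div (hPmeas' j).measurable).stronglyMeasurable
  have hterm_int : ∀ (g : ℕ → Ω → ℝ), (∀ k, StronglyMeasurable[𝓕 k] (g k)) →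
      (∀ k ω, 0 ≤ g k ω) → (∀ k, Integrable (g k) μ) → ∀ j,
      Integrable (fun ω => g j ω / P (j + 1) ω) μ := by
    intro g hgm hg0 hgi j
    refine (hgi j).mono
      (((hterm_meas g hgm j).mono (𝓕.le j)).aestronglyMeasurable) (ae_of_all _ fun ω => ?_)
    rw [Real.norm_eq_abs, Real.norm_eq_abs, abs_of_nonneg (hg0 j ω),
      abs_of_nonneg (div_nonneg (hg0 j ω) (hPpos (j + 1) ω).le)]
    exact div_le_self (hg0 j ω) (hP1 (j + 1) ω)
  have hA_meas : ∀ k, StronglyMeasurable[𝓕 k] (A k) := fun k =>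
    Finset.stronglyMeasurable_fun_sum _ fun j hj =>
      (hterm_meas α hα_meas j).mono (𝓕.mono (Finset.mem_range.mp hj).le)
  have hB_meas : ∀ k, StronglyMeasurable[𝓕 k] (B k) := fun k =>
    Finset.stronglyMeasurable_fun_sum _ fun j hj =>
      (hterm_meas β hβ_meas j).mono (𝓕.mono (Finset.mem_range.mp hj).le)
  have hA_meas' : ∀ k, StronglyMeasurable[𝓕 k] (A (k + 1)) := fun k =>
    Finset.stronglyMeasurable_fun_sum _ fun j hj =>
      (hterm_meas α hα_meas j).mono (𝓕.mono (Nat.lt_succ_iff.mp (Finset.mem_range.mp hj)))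
  have hB_meas' : ∀ k, StronglyMeasurable[𝓕 k] (B (k + 1)) := fun k =>
    Finset.stronglyMeasurable_fun_sum _ fun j hj =>
      (hterm_meas β hβ_meas j).mono (𝓕.mono (Nat.lt_succ_iff.mp (Finset.mem_range.mp hj)))
  have hA_int : ∀ k, Integrable (A k) μ := fun k =>
    integrable_finset_sum _ fun j _ => hterm_int α hα_meas hα_nonneg hα_int j
  have hB_int : ∀ k, Integrable (B k) μ := fun k =>
    integrable_finset_sum _ fun j _ => hterm_int β hβ_meas hβ_nonneg hβ_int j
  have hA_nonneg : ∀ k ω, 0 ≤ A k ω := fun k ω =>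
    Finset.sum_nonneg fun j _ => div_nonneg (hα_nonneg j ω) (hPpos (j + 1) ω).le
  have hB_nonneg : ∀ k ω, 0 ≤ B k ω := fun k ω =>
    Finset.sum_nonneg fun j _ => div_nonneg (hβ_nonneg j ω) (hPpos (j + 1) ω).le
  have hB_le : ∀ k ω, B k ω ≤ ∑ j ∈ Finset.range k, β j ω := fun k ω =>
    Finset.sum_le_sum fun j _ => div_le_self (hβ_nonneg j ω) (hP1 (j + 1) ω)
  -- the centered process
  set X : ℕ → Ω → ℝ := fun k ω => V k ω / P k ω + A k ω - B k ω with hXdef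
  have hVP_meas : ∀ k, StronglyMeasurable[𝓕 k] fun ω => V k ω / P k ω := fun k =>
    ((hV_meas k).measurable.div (hPmeas k).measurable).stronglyMeasurable
  have hVP_int : ∀ k, Integrable (fun ω => V k ω / P k ω) μ := by
    intro k
    refine (hV_int k).mono
      (((hVP_meas k).mono (𝓕.le k)).aestronglyMeasurable) (ae_of_all _ fun ω => ?_)
    rw [Real.norm_eq_abs, Real.norm_eq_abs, abs_of_nonneg (hV_nonneg k ω),
      abs_of_nonneg (div_nonneg (hV_nonneg k ω) (hPpos k ω).le)]
    exact div_le_self (hV_nonneg k ω) (hP1 k ω)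
  have hX_meas : ∀ k, StronglyMeasurable[𝓕 k] (X k) := fun k =>
    ((hVP_meas k).add (hA_meas k)).sub (hB_meas k)
  have hX_int : ∀ k, Integrable (X k) μ := fun k =>
    ((hVP_int k).add (hA_int k)).sub (hB_int k)
  have hX0 : ∀ ω, X 0 ω = V 0 ω := by
    intro ω
    simp [hXdef, hAdef, hBdef, hP0 ω]
  -- the key supermartingale inequality for X
  have hcondX : ∀ k, μ[X (k + 1)|𝓕 k] ≤ᵐ[μ] X k := by
    intro k
    set g1 : Ω → ℝ := fun ω => (P (k + 1) ω)⁻¹ * V (k + 1) ω with hg1def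
    set g2 : Ω → ℝ := fun ω => A (k + 1) ω - B (k + 1) ω with hg2def
    have hPinv_meas : StronglyMeasurable[𝓕 k] fun ω => (P (k + 1) ω)⁻¹ :=
      (hPmeas' k).measurable.inv.stronglyMeasurable
    have hg1_int : Integrable g1 μ := by
      refine (hV_int (k + 1)).mono
        ((hPinv_meas.mono (𝓕.le k)).aestronglyMeasurable.mul
          ((hV_meas (k + 1)).mono (𝓕.le (k + 1))).aestronglyMeasurable)
        (ae_of_all _ fun ω => ?_)
      have h1 : 0 < P (k + 1) ω := hPpos (k + 1) ω
      have h2 : (P (k + 1) ω)⁻¹ ≤ 1 := inv_le_one_of_one_le₀ (hP1 (k + 1) ω)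
      rw [Real.norm_eq_abs, Real.norm_eq_abs, abs_of_nonneg (hV_nonneg (k + 1) ω),
        abs_of_nonneg (mul_nonneg (inv_nonneg.mpr h1.le) (hV_nonneg (k + 1) ω))]
      exact mul_le_of_le_one_left (hV_nonneg (k + 1) ω) h2
    have hg2_meas : StronglyMeasurable[𝓕 k] g2 := (hA_meas' k).sub (hB_meas' k)
    have hg2_int : Integrable g2 μ := (hA_int (k + 1)).sub (hB_int (k + 1))
    have hXsplit : X (k + 1) = g1 + g2 := by
      funext ω
      simp only [hXdef, hg1def, hg2def, Pi.add_apply]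
      rw [div_eq_inv_mul]
      ring
    have h1 : μ[X (k + 1)|𝓕 k] =ᵐ[μ] μ[g1|𝓕 k] + μ[g2|𝓕 k] := by
      rw [hXsplit]; exact condExp_add hg1_int hg2_int _
    have h2 : μ[g1|𝓕 k] =ᵐ[μ] (fun ω => (P (k + 1) ω)⁻¹) * μ[V (k + 1)|𝓕 k] :=
      condExp_mul_of_stronglyMeasurable_left hPinv_meas hg1_int (hV_int (k + 1))
    have h3 : μ[g2|𝓕 k] = g2 := condExp_of_stronglyMeasurable (𝓕.le k) hg2_meas hg2_int
    filter_upwards [h1, h2, hcond k] with ω e1 e2 e4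
    have hPk := hPpos k ω
    have hPk1 := hPpos (k + 1) ω
    have huk := hu_nonneg k ω
    have e5 : P (k + 1) ω = P k ω * (1 + u k ω) := hPsucc k ω
    have eA : A (k + 1) ω = A k ω + α k ω / P (k + 1) ω := Finset.sum_range_succ _ _
    have eB : B (k + 1) ω = B k ω + β k ω / P (k + 1) ω := Finset.sum_range_succ _ _
    have key : (P (k + 1) ω)⁻¹ * ((1 + u k ω) * V k ω - α k ω + β k ω) + g2 ω = X k ω := by
      simp only [hg2def, hXdef]
      rw [eA, eB, e5]
      have hPk' : P k ω ≠ 0 := hPk.ne'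
      have h1u : (1 : ℝ) + u k ω ≠ 0 := by positivity
      field_simp
      ring
    have hmul : (P (k + 1) ω)⁻¹ * (μ[V (k + 1)|𝓕 k]) ω ≤
        (P (k + 1) ω)⁻¹ * ((1 + u k ω) * V k ω - α k ω + β k ω) :=
      mul_le_mul_of_nonneg_left e4 (inv_nonneg.mpr hPk1.le)
    have e1' : (μ[X (k + 1)|𝓕 k]) ω = (μ[g1|𝓕 k]) ω + (μ[g2|𝓕 k]) ω := e1
    have e2' : (μ[g1|𝓕 k]) ω = (P (k + 1) ω)⁻¹ * (μ[V (k + 1)|𝓕 k]) ω := e2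
    have e3' : (μ[g2|𝓕 k]) ω = g2 ω := by rw [h3]
    rw [e1', e2', e3']
    linarith
  -- truncation events and the truncated process
  set S : ℕ → ℕ → Set Ω := fun a k =>
    {ω | (∑ j ∈ Finset.range k, u j ω) ≤ (a : ℝ) ∧ (∑ j ∈ Finset.range k, β j ω) ≤ (a : ℝ)}
    with hSdef
  set c : ℕ → ℕ → Ω → ℝ := fun a k => (S a k).indicator fun _ => (1 : ℝ) with hcdef
  have hc01 : ∀ a k ω, c a k ω = 0 ∨ c a k ω = 1 := by
    intro a k ω
    by_cases h : ω ∈ S a k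
    · right; simp [hcdef, h]
    · left; simp [hcdef, h]
  have hc_nonneg : ∀ a k ω, 0 ≤ c a k ω := by
    intro a k ω; rcases hc01 a k ω with h | h <;> rw [h] <;> norm_num
  have hc_le_one : ∀ a k ω, c a k ω ≤ 1 := by
    intro a k ω; rcases hc01 a k ω with h | h <;> rw [h] <;> norm_num
  have hS_anti : ∀ a k ω, ω ∈ S a (k + 1) → ω ∈ S a k := by
    intro a k ω h
    obtain ⟨h1, h2⟩ := h
    constructor
    · refine le_trans (Finset.sum_le_sum_of_subset_of_nonneg
        (Finset.range_subset_range.mpr k.le_succ) fun j _ _ => hu_nonneg j ω) h1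
    · refine le_trans (Finset.sum_le_sum_of_subset_of_nonneg
        (Finset.range_subset_range.mpr k.le_succ) fun j _ _ => hβ_nonneg j ω) h2
  have hS_meas : ∀ a k n, k ≤ n + 1 → MeasurableSet[𝓕 n] (S a k) := by
    intro a k n hkn
    have hu' : Measurable[𝓕 n] fun ω => ∑ j ∈ Finset.range k, u j ω :=
      Finset.measurable_sum _ fun j hj =>
        ((hu_meas j).mono (𝓕.mono (Nat.lt_succ_iff.mp
          (lt_of_lt_of_le (Finset.mem_range.mp hj) hkn)))).measurable
    have hβ' : Measurable[𝓕 n] fun ω => ∑ j ∈ Finset.range k, β j ω :=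
      Finset.measurable_sum _ fun j hj =>
        ((hβ_meas j).mono (𝓕.mono (Nat.lt_succ_iff.mp
          (lt_of_lt_of_le (Finset.mem_range.mp hj) hkn)))).measurable
    exact (measurableSet_le hu' measurable_const).inter
      (measurableSet_le hβ' measurable_const)
  have hc_meas : ∀ a k n, k ≤ n + 1 → StronglyMeasurable[𝓕 n] (c a k) := fun a k n h =>
    stronglyMeasurable_const.indicator (hS_meas a k n h)
  have hBa : ∀ a k ω, ω ∈ S a k → B k ω ≤ (a : ℝ) := fun a k ω h =>
    le_trans (hB_le k ω) h.2
  have hXa_nonneg : ∀ a k ω, ω ∈ S a k → 0 ≤ X k ω + (a : ℝ) := by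
    intro a k ω h
    have h1 := hBa a k ω h
    have h2 : 0 ≤ V k ω / P k ω := div_nonneg (hV_nonneg k ω) (hPpos k ω).le
    have h3 := hA_nonneg k ω
    simp only [hXdef]
    linarith
  set Y : ℕ → ℕ → Ω → ℝ := fun a k ω => c a k ω * (X k ω + (a : ℝ)) with hYdef
  have hY_nonneg : ∀ a k ω, 0 ≤ Y a k ω := by
    intro a k ω
    by_cases h : ω ∈ S a k
    · have := hXa_nonneg a k ω h
      have hc1 : c a k ω = 1 := by simp [hcdef, h]
      simp only [hYdef, hc1, one_mul]; exact this
    · have hc0 : c a k ω = 0 := by simp [hcdef, h]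
      simp only [hYdef, hc0, zero_mul]; exact le_refl 0
  have hXa_int : ∀ a k, Integrable (fun ω => X k ω + (a : ℝ)) μ := fun a k =>
    (hX_int k).add (integrable_const _)
  have hY_int : ∀ a k, Integrable (Y a k) μ := by
    intro a k
    refine (hXa_int a k).bdd_mul (c := 1)
      (((hc_meas a k k k.le_succ).mono (𝓕.le k)).aestronglyMeasurable)
      (ae_of_all _ fun ω => ?_)
    rw [Real.norm_eq_abs, abs_of_nonneg (hc_nonneg a k ω)]
    exact hc_le_one a k ω
  have hY_adapted : ∀ a, StronglyAdapted 𝓕 (Y a) := fun a k =>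
    (hc_meas a k k k.le_succ).mul ((hX_meas k).add stronglyMeasurable_const)
  -- Y is a supermartingale
  have hY_super : ∀ a, Supermartingale (Y a) 𝓕 μ := by
    intro a
    refine supermartingale_nat (hY_adapted a) (hY_int a) fun k => ?_
    have h1 : μ[Y a (k + 1)|𝓕 k] =ᵐ[μ]
        c a (k + 1) * μ[fun ω => X (k + 1) ω + (a : ℝ)|𝓕 k] :=
      condExp_mul_of_stronglyMeasurable_left (hc_meas a (k + 1) k le_rfl)
        (hY_int a (k + 1)) (hXa_int a (k + 1))
    have h2 : μ[fun ω => X (k + 1) ω + (a : ℝ)|𝓕 k] =ᵐ[μ]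
        μ[X (k + 1)|𝓕 k] + fun _ => (a : ℝ) := by
      have := condExp_add (μ := μ) (m := 𝓕 k) (hX_int (k + 1))
        (integrable_const (a : ℝ))
      refine this.trans ?_
      rw [condExp_const (𝓕.le k)]
    filter_upwards [h1, h2, hcondX k] with ω e1 e2 e3
    have e1' : (μ[Y a (k + 1)|𝓕 k]) ω =
        c a (k + 1) ω * (μ[fun ω => X (k + 1) ω + (a : ℝ)|𝓕 k]) ω := e1
    have e2' : (μ[fun ω => X (k + 1) ω + (a : ℝ)|𝓕 k]) ω =
        (μ[X (k + 1)|𝓕 k]) ω + (a : ℝ) := e2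
    rw [e1', e2']
    have step1 : c a (k + 1) ω * ((μ[X (k + 1)|𝓕 k]) ω + (a : ℝ)) ≤
        c a (k + 1) ω * (X k ω + (a : ℝ)) :=
      mul_le_mul_of_nonneg_left (by linarith) (hc_nonneg a (k + 1) ω)
    refine le_trans step1 ?_
    by_cases h : ω ∈ S a (k + 1)
    · have hk : ω ∈ S a k := hS_anti a k ω h
      have hc1 : c a (k + 1) ω = 1 := by simp [hcdef, h]
      have hc2 : c a k ω = 1 := by simp [hcdef, hk]
      show c a (k + 1) ω * (X k ω + (a : ℝ)) ≤ c a k ω * (X k ω + (a : ℝ))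
      rw [hc1, hc2]
    · have hc0 : c a (k + 1) ω = 0 := by simp [hcdef, h]
      rw [hc0, zero_mul]
      exact hY_nonneg a k ω
  -- L¹ bound and a.s. convergence of Y a
  have hY0_le : ∀ a ω, Y a 0 ω ≤ V 0 ω + (a : ℝ) := by
    intro a ω
    have h1 : X 0 ω + (a : ℝ) = V 0 ω + (a : ℝ) := by rw [hX0 ω]
    by_cases h : ω ∈ S a 0
    · have hc1 : c a 0 ω = 1 := by simp [hcdef, h]
      simp only [hYdef, hc1, one_mul, h1]; exact le_refl _
    · have hc0 : c a 0 ω = 0 := by simp [hcdef, h]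
      simp only [hYdef, hc0, zero_mul]
      have := hV_nonneg 0 ω
      positivity
  have hYtend : ∀ a : ℕ, ∀ᵐ ω ∂μ, ∃ l, Tendsto (fun k => Y a k ω) atTop (nhds l) := by
    intro a
    have hsub : Submartingale (-(Y a)) 𝓕 μ := (hY_super a).neg
    have hbdd : ∀ n, eLpNorm ((-(Y a)) n) 1 μ ≤
        ((((∫ ω, V 0 ω ∂μ) + (a : ℝ)).toNNReal : NNReal) : ENNReal) := by
      intro n
      have hnorm : eLpNorm ((-(Y a)) n) 1 μ = eLpNorm (Y a n) 1 μ := by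
        have : (-(Y a)) n = -(Y a n) := rfl
        rw [this, eLpNorm_neg]
      rw [hnorm, eLpNorm_one_eq_lintegral_enorm,
        ← ofReal_integral_norm_eq_lintegral_enorm (hY_int a n)]
      have hint1 : ∫ ω, ‖Y a n ω‖ ∂μ = ∫ ω, Y a n ω ∂μ := by
        refine integral_congr_ae (ae_of_all _ fun ω => ?_)
        show ‖Y a n ω‖ = Y a n ω
        exact Real.norm_of_nonneg (hY_nonneg a n ω)
      have hint2 : ∫ ω, Y a n ω ∂μ ≤ ∫ ω, Y a 0 ω ∂μ := by
        have := (hY_super a).setIntegral_le (Nat.zero_le n)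
          (MeasurableSet.univ : MeasurableSet[𝓕 0] Set.univ)
        simpa [setIntegral_univ] using this
      have hint3 : ∫ ω, Y a 0 ω ∂μ ≤ ∫ ω, (V 0 ω + (a : ℝ)) ∂μ :=
        integral_mono (hY_int a 0) ((hV_int 0).add (integrable_const _))
          fun ω => hY0_le a ω
      have hint4 : ∫ ω, (V 0 ω + (a : ℝ)) ∂μ = (∫ ω, V 0 ω ∂μ) + (a : ℝ) := by
        rw [integral_add (hV_int 0) (integrable_const _), integral_const]
        simp
      have : ∫ ω, ‖Y a n ω‖ ∂μ ≤ (∫ ω, V 0 ω ∂μ) + (a : ℝ) := by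
        rw [hint1]; linarith
      calc ENNReal.ofReal (∫ ω, ‖Y a n ω‖ ∂μ)
          ≤ ENNReal.ofReal ((∫ ω, V 0 ω ∂μ) + (a : ℝ)) := ENNReal.ofReal_le_ofReal this
        _ = ((((∫ ω, V 0 ω ∂μ) + (a : ℝ)).toNNReal : NNReal) : ENNReal) := rfl
    have := hsub.exists_ae_tendsto_of_bdd hbdd
    filter_upwards [this] with ω ⟨l, hl⟩
    refine ⟨-l, ?_⟩
    have : Tendsto (fun n => -((-(Y a)) n ω)) atTop (nhds (-l)) := hl.neg
    simpa using this
  -- combine everything pointwise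
  rw [← ae_all_iff] at hYtend
  filter_upwards [hYtend, hu_sum, hβ_sum] with ω htd hus hbs
  -- choose a truncation level that never binds at ω
  obtain ⟨a, ha⟩ := exists_nat_ge (max (∑' k, u k ω) (∑' k, β k ω))
  have hua : (∑' k, u k ω) ≤ (a : ℝ) := le_trans (le_max_left _ _) ha
  have hba : (∑' k, β k ω) ≤ (a : ℝ) := le_trans (le_max_right _ _) ha
  have hmem : ∀ k, ω ∈ S a k := by
    intro k
    constructor
    · exact le_trans (Summable.sum_le_tsum (Finset.range k) (fun j _ => hu_nonneg j ω) hus) hua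
    · exact le_trans (Summable.sum_le_tsum (Finset.range k) (fun j _ => hβ_nonneg j ω) hbs) hba
  obtain ⟨l, hl⟩ := htd a
  have hXtend : Tendsto (fun k => X k ω) atTop (nhds (l - (a : ℝ))) := by
    have hY_eq : ∀ k, Y a k ω = X k ω + (a : ℝ) := by
      intro k
      have hc1 : c a k ω = 1 := by simp [hcdef, hmem k]
      simp [hYdef, hc1]
    have h1 : Tendsto (fun k => X k ω + (a : ℝ)) atTop (nhds l) := by
      refine hl.congr fun k => ?_
      rw [hY_eq k]
    have := h1.sub (tendsto_const_nhds (x := (a : ℝ)))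
    simpa using this
  -- summability of the discounted β-series and convergence of B
  have hBsum : Summable fun j => β j ω / P (j + 1) ω :=
    Summable.of_nonneg_of_le (fun j => div_nonneg (hβ_nonneg j ω) (hPpos (j + 1) ω).le)
      (fun j => div_le_self (hβ_nonneg j ω) (hP1 (j + 1) ω)) hbs
  have hBtend : Tendsto (fun k => B k ω) atTop (nhds (∑' j, β j ω / P (j + 1) ω)) :=
    hBsum.hasSum.tendsto_sum_nat
  -- V/P + A converges
  have hVAtend : Tendsto (fun k => V k ω / P k ω + A k ω) atTop
      (nhds ((l - (a : ℝ)) + ∑' j, β j ω / P (j + 1) ω)) := by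
    have := hXtend.add hBtend
    refine this.congr fun k => ?_
    simp only [hXdef]
    ring
  -- A is bounded above, hence the discounted α-series is summable
  have hbdd : BddAbove (Set.range fun k => V k ω / P k ω + A k ω) :=
    hVAtend.bddAbove_range
  obtain ⟨M, hM⟩ := hbdd
  have hαPsum : Summable fun j => α j ω / P (j + 1) ω := by
    refine summable_of_sum_range_le (c := M)
      (fun j => div_nonneg (hα_nonneg j ω) (hPpos (j + 1) ω).le) fun k => ?_
    have h1 : A k ω ≤ V k ω / P k ω + A k ω := by
      have : 0 ≤ V k ω / P k ω := div_nonneg (hV_nonneg k ω) (hPpos k ω).le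
      linarith
    exact le_trans h1 (hM ⟨k, rfl⟩)
  -- the exponential bound on P
  set C : ℝ := Real.exp (∑' j, u j ω) with hCdef
  have hPC : ∀ k, P k ω ≤ C := by
    intro k
    refine le_trans (hPle k ω) (Real.exp_le_exp.mpr ?_)
    exact Summable.sum_le_tsum (Finset.range k) (fun j _ => hu_nonneg j ω) hus
  -- summability of α
  have hαsum : Summable fun j => α j ω := by
    refine Summable.of_nonneg_of_le (fun j => hα_nonneg j ω) (fun j => ?_)
      (hαPsum.mul_right C)
    calc α j ω = α j ω / P (j + 1) ω * P (j + 1) ω :=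
          (div_mul_cancel₀ _ (hPpos (j + 1) ω).ne').symm
      _ ≤ α j ω / P (j + 1) ω * C := mul_le_mul_of_nonneg_left (hPC (j + 1))
          (div_nonneg (hα_nonneg j ω) (hPpos (j + 1) ω).le)
  -- A converges, so V/P converges
  have hAtend : Tendsto (fun k => A k ω) atTop (nhds (∑' j, α j ω / P (j + 1) ω)) :=
    hαPsum.hasSum.tendsto_sum_nat
  have hVPtend : Tendsto (fun k => V k ω / P k ω) atTop
      (nhds ((l - (a : ℝ)) + (∑' j, β j ω / P (j + 1) ω) - ∑' j, α j ω / P (j + 1) ω)) := by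
    have := hVAtend.sub hAtend
    refine this.congr fun k => ?_
    ring
  -- P converges
  have hPbdd : BddAbove (Set.range fun k => P k ω) := ⟨C, by rintro x ⟨k, rfl⟩; exact hPC k⟩
  have hPtend : Tendsto (fun k => P k ω) atTop (nhds (⨆ k, P k ω)) :=
    tendsto_atTop_ciSup (hPmono ω) hPbdd
  -- V converges
  have hVtend : Tendsto (fun k => V k ω) atTop
      (nhds (((l - (a : ℝ)) + (∑' j, β j ω / P (j + 1) ω) - ∑' j, α j ω / P (j + 1) ω) *
        (⨆ k, P k ω))) := by
    have := hVPtend.mul hPtend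
    refine this.congr fun k => ?_
    exact div_mul_cancel₀ _ (hPpos k ω).ne'
  exact ⟨⟨_, hVtend⟩, hαsum⟩
end

section
/- Let A = (a_{ij}) be an N×N doubly stochastic matrix satisfying the geometric mixing bound |[A^m]_{ij} − 1/N| ≤ θ β^m for all i, j and all m ≥ 1, for some θ > 0 and β ∈ (0,1). Let ξ_i(k), v_i(k) ∈ ℝ^q satisfy v_i(0) = ξ_i(0), v̂_i(k) = Σ_{j=1}^N a_{ij} v_j(k), v_i(k+1) = v̂_i(k) + ξ_i(k+1) − ξ_i(k), and suppose there is a constant c ≥ 0 with ‖ξ_q(s) − ξ_q(s−1)‖ ≤ c for all q and all s ≥ 1. Then for every i and every k ≥ 0, ‖v̂_i(k) − ξ̄(k)‖ ≤ θ β^{k+1} Σ_{p=1}^N ‖ξ_p(0)‖ + N θ c Σ_{s=1}^{k} β^{k+1−s}, where ξ̄(k) = (1/N)Σ_{q=1}^N ξ_q(k). Consequently ‖v̂_i(k) − ξ̄(k)‖ ≤ θ β^{k+1} Σ_{p} ‖ξ_p(0)‖ + N θ c β/(1−β) for all k, and v̂_i(k) − ξ̄(k) → 0 whenever the increments ξ_q(s)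 − ξ_q(s−1) are bounded by c β-summably. -/
open Finset Filter

/-- Consensus-error bound for the dynamic-average-tracking variables: for a
doubly stochastic mixing matrix with geometric mixing bound
`|[A^m]_{ij} - 1/N| ≤ θ β^m`, and increments `‖ξ r s - ξ r (s-1)‖ ≤ c`,
`‖v̂ i k - ξ̄ k‖ ≤ θ β^(k+1) ∑_p ‖ξ p 0‖ + N θ c ∑_{s=1}^k β^(k+1-s)`, hence
`‖v̂ i k - ξ̄ k‖ ≤ θ β^(k+1) ∑_p ‖ξ p 0‖ + N θ c β/(1-β)`, and
`v̂ i k - ξ̄ k → 0` whenever the increments are bounded summably. -/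
theorem consensus_error_bound {N q : ℕ}
    (a : Matrix (Fin N) (Fin N) ℝ)
    (ha_nonneg : ∀ i j, 0 ≤ a i j)
    (ha_row : ∀ i, ∑ j, a i j = 1)
    (ha_col : ∀ j, ∑ i, a i j = 1)
    (θ β : ℝ) (hθ : 0 < θ) (hβ0 : 0 < β) (hβ1 : β < 1)
    (hmix : ∀ m : ℕ, 1 ≤ m → ∀ i j, |(a ^ m) i j - (N : ℝ)⁻¹| ≤ θ * β ^ m)
    (ξ v vhat : ℕ → Fin N → EuclideanSpace ℝ (Fin q))
    (hv0 : ∀ i, v 0 i = ξ 0 i)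
    (hvhat : ∀ k i, vhat k i = ∑ j, a i j • v k j)
    (hv : ∀ k i, v (k + 1) i = vhat k i + ξ (k + 1) i - ξ k i)
    (ξbar : ℕ → EuclideanSpace ℝ (Fin q))
    (hξbar : ∀ k, ξbar k = (N : ℝ)⁻¹ • ∑ r, ξ k r)
    (c : ℝ) (hc : 0 ≤ c)
    (hinc : ∀ (r : Fin N) (s : ℕ), 1 ≤ s → ‖ξ s r - ξ (s - 1) r‖ ≤ c) :
    (∀ i k, ‖vhat k i - ξbar k‖ ≤
        θ * β ^ (k + 1) * ∑ p, ‖ξ 0 p‖ +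
          N * θ * c * ∑ s ∈ Finset.Icc 1 k, β ^ (k + 1 - s)) ∧
      (∀ i k, ‖vhat k i - ξbar k‖ ≤
        θ * β ^ (k + 1) * ∑ p, ‖ξ 0 p‖ + N * θ * c * β / (1 - β)) ∧
      (∀ c' : ℕ → ℝ, (∀ (r : Fin N) (s : ℕ), 1 ≤ s → ‖ξ s r - ξ (s - 1) r‖ ≤ c' s) →
        Summable c' →
        ∀ i, Tendsto (fun k => vhat k i - ξbar k) atTop (nhds 0)) := by
  -- key identity
  have key : ∀ k i, vhat k i =
      (∑ j, (a ^ (k+1)) i j • ξ 0 j) +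
      ∑ s ∈ Finset.Icc 1 k, ∑ j, (a ^ (k+1-s)) i j • (ξ s j - ξ (s-1) j) := by
    intro k
    induction k with
    | zero =>
      intro i
      simp [hvhat, hv0, pow_one]
    | succ k ih =>
      intro i
      have hstep : ∀ j, v (k+1) j = vhat k j + (ξ (k+1) j - ξ k j) := by
        intro j; rw [hv]; abel
      have e1 : vhat (k+1) i
          = (∑ j, a i j • vhat k j) + ∑ j, a i j • (ξ (k+1) j - ξ k j) := by
        rw [hvhat]
        simp only [hstep, smul_add]
        exact Finset.sum_add_distrib
      have e2 : (∑ j, a i j • vhat k j)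
          = (∑ l, (a ^ (k+2)) i l • ξ 0 l) +
            ∑ s ∈ Finset.Icc 1 k, ∑ l, (a ^ (k+2-s)) i l • (ξ s l - ξ (s-1) l) := by
        simp only [ih, smul_add, Finset.smul_sum, smul_smul]
        rw [Finset.sum_add_distrib]
        congr 1
        · rw [Finset.sum_comm]
          refine Finset.sum_congr rfl fun l _ => ?_
          rw [← Finset.sum_smul]
          congr 1
          rw [pow_succ' a (k+1), Matrix.mul_apply]
        · rw [Finset.sum_comm]
          refine Finset.sum_congr rfl fun s hs => ?_
          rw [Finset.sum_comm]
          refine Finset.sum_congr rfl fun l _ => ?_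
          rw [← Finset.sum_smul]
          congr 1
          have hs' : s ≤ k := (Finset.mem_Icc.mp hs).2
          have : k + 2 - s = (k + 1 - s) + 1 := by omega
          rw [this, pow_succ' a (k+1-s), Matrix.mul_apply]
      have e3 : (∑ j, a i j • (ξ (k+1) j - ξ k j))
          = ∑ j, (a ^ (k+1+1-(k+1))) i j • (ξ (k+1) j - ξ (k+1-1) j) := by
        refine Finset.sum_congr rfl fun j _ => ?_
        norm_num
      rw [e1, e2, e3]
      rw [Finset.sum_Icc_succ_top (by omega : 1 ≤ k + 1)]
      have : ∀ s ∈ Finset.Icc 1 k, (∑ l, (a ^ (k+2-s)) i l • (ξ s l - ξ (s-1) l))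
          = ∑ l, (a ^ (k+1+1-s)) i l • (ξ s l - ξ (s-1) l) := by
        intro s hs; rfl
      rw [Finset.sum_congr rfl this]
      abel
  -- telescoping for ξ
  have tel : ∀ k j, ξ k j = ξ 0 j + ∑ s ∈ Finset.Icc 1 k, (ξ s j - ξ (s-1) j) := by
    intro k
    induction k with
    | zero => intro j; simp
    | succ k ih =>
      intro j
      rw [Finset.sum_Icc_succ_top (by omega : 1 ≤ k + 1), Nat.add_sub_cancel, ← add_assoc,
        ← ih j]
      abel
  -- difference identity
  have diff : ∀ k i, vhat k i - ξbar k =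
      (∑ j, ((a ^ (k+1)) i j - (N:ℝ)⁻¹) • ξ 0 j) +
      ∑ s ∈ Finset.Icc 1 k, ∑ j, ((a ^ (k+1-s)) i j - (N:ℝ)⁻¹) • (ξ s j - ξ (s-1) j) := by
    intro k i
    have hbar : ξbar k = (∑ j, (N:ℝ)⁻¹ • ξ 0 j) +
        ∑ s ∈ Finset.Icc 1 k, ∑ j, (N:ℝ)⁻¹ • (ξ s j - ξ (s-1) j) := by
      rw [hξbar, Finset.smul_sum]
      simp only [tel k, smul_add, Finset.smul_sum]
      rw [Finset.sum_add_distrib]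
      congr 1
      exact Finset.sum_comm
    rw [key, hbar]
    simp only [sub_smul, Finset.sum_sub_distrib]
    abel
  -- generic bound
  have bound : ∀ (c' : ℕ → ℝ), (∀ (r : Fin N) (s : ℕ), 1 ≤ s → ‖ξ s r - ξ (s-1) r‖ ≤ c' s) →
      ∀ i k, ‖vhat k i - ξbar k‖ ≤
        θ * β ^ (k+1) * ∑ p, ‖ξ 0 p‖ + N * θ * ∑ s ∈ Finset.Icc 1 k, c' s * β ^ (k+1-s) := by
    intro c' hc' i k
    rw [diff]
    refine (norm_add_le _ _).trans (add_le_add ?_ ?_)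
    · calc ‖∑ j, ((a ^ (k+1)) i j - (N:ℝ)⁻¹) • ξ 0 j‖
          ≤ ∑ j, ‖((a ^ (k+1)) i j - (N:ℝ)⁻¹) • ξ 0 j‖ := norm_sum_le _ _
        _ ≤ ∑ j, θ * β ^ (k+1) * ‖ξ 0 j‖ := by
            refine Finset.sum_le_sum fun j _ => ?_
            rw [norm_smul, Real.norm_eq_abs]
            exact mul_le_mul_of_nonneg_right (hmix (k+1) (by omega) i j) (norm_nonneg _)
        _ = θ * β ^ (k+1) * ∑ p, ‖ξ 0 p‖ := by rw [← Finset.mul_sum]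
    · calc ‖∑ s ∈ Finset.Icc 1 k, ∑ j, ((a ^ (k+1-s)) i j - (N:ℝ)⁻¹) • (ξ s j - ξ (s-1) j)‖
          ≤ ∑ s ∈ Finset.Icc 1 k, ‖∑ j, ((a ^ (k+1-s)) i j - (N:ℝ)⁻¹) • (ξ s j - ξ (s-1) j)‖ :=
            norm_sum_le _ _
        _ ≤ ∑ s ∈ Finset.Icc 1 k, N * θ * (c' s * β ^ (k+1-s)) := by
            refine Finset.sum_le_sum fun s hs => ?_
            obtain ⟨hs1, hs2⟩ := Finset.mem_Icc.mp hs
            calc ‖∑ j, ((a ^ (k+1-s)) i j - (N:ℝ)⁻¹) • (ξ s j - ξ (s-1) j)‖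
                ≤ ∑ j, ‖((a ^ (k+1-s)) i j - (N:ℝ)⁻¹) • (ξ s j - ξ (s-1) j)‖ := norm_sum_le _ _
              _ ≤ ∑ _j : Fin N, θ * β ^ (k+1-s) * c' s := by
                  refine Finset.sum_le_sum fun j _ => ?_
                  rw [norm_smul, Real.norm_eq_abs]
                  refine mul_le_mul (hmix (k+1-s) (by omega) i j) (hc' j s hs1)
                    (norm_nonneg _) ?_
                  positivity
              _ = N * θ * (c' s * β ^ (k+1-s)) := by
                  rw [Finset.sum_const, Finset.card_univ, Fintype.card_fin, nsmul_eq_mul]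
                  ring
        _ = N * θ * ∑ s ∈ Finset.Icc 1 k, c' s * β ^ (k+1-s) := by rw [← Finset.mul_sum]
  refine ⟨?_, ?_, ?_⟩
  · intro i k
    have := bound (fun _ => c) (fun r s hs => hinc r s hs) i k
    calc ‖vhat k i - ξbar k‖
        ≤ θ * β ^ (k+1) * ∑ p, ‖ξ 0 p‖ + N * θ * ∑ s ∈ Finset.Icc 1 k, c * β ^ (k+1-s) := this
      _ = θ * β ^ (k+1) * ∑ p, ‖ξ 0 p‖ + N * θ * c * ∑ s ∈ Finset.Icc 1 k, β ^ (k+1-s) := by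
          rw [← Finset.mul_sum, ← mul_assoc]
  · intro i k
    have h1 := bound (fun _ => c) (fun r s hs => hinc r s hs) i k
    have hgeo : ∑ s ∈ Finset.Icc 1 k, β ^ (k+1-s) ≤ β / (1 - β) := by
      have hre : ∑ s ∈ Finset.Icc 1 k, β ^ (k+1-s) = ∑ m ∈ Finset.Icc 1 k, β ^ m := by
        refine Finset.sum_nbij' (fun s => k+1-s) (fun m => k+1-m) ?_ ?_ ?_ ?_ ?_
        · intro s hs; simp only [Finset.mem_Icc] at hs ⊢; omega
        · intro m hm; simp only [Finset.mem_Icc] at hm ⊢; omega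
        · intro s hs; simp only [Finset.mem_Icc] at hs
          show k + 1 - (k + 1 - s) = s; omega
        · intro m hm; simp only [Finset.mem_Icc] at hm
          show k + 1 - (k + 1 - m) = m; omega
        · intro s hs; rfl
      rw [hre, ← Finset.Ico_add_one_right_eq_Icc, Finset.sum_Ico_eq_sum_range]
      try simp only [Nat.add_sub_cancel]
      have : ∀ i0 : ℕ, β ^ (1 + i0) = β * β ^ i0 := fun i0 => by rw [pow_add, pow_one]
      simp only [this, ← Finset.mul_sum]
      rw [div_eq_mul_inv]
      refine mul_le_mul_of_nonneg_left ?_ hβ0.le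
      calc ∑ i0 ∈ Finset.range k, β ^ i0
          ≤ ∑' i0 : ℕ, β ^ i0 := Summable.sum_le_tsum _ (fun i0 _ => pow_nonneg hβ0.le i0)
            (summable_geometric_of_lt_one hβ0.le hβ1)
        _ = (1 - β)⁻¹ := tsum_geometric_of_lt_one hβ0.le hβ1
    calc ‖vhat k i - ξbar k‖
        ≤ θ * β ^ (k+1) * ∑ p, ‖ξ 0 p‖ + N * θ * ∑ s ∈ Finset.Icc 1 k, c * β ^ (k+1-s) := h1
      _ = θ * β ^ (k+1) * ∑ p, ‖ξ 0 p‖ + N * θ * c * ∑ s ∈ Finset.Icc 1 k, β ^ (k+1-s) := by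
          rw [← Finset.mul_sum, ← mul_assoc]
      _ ≤ θ * β ^ (k+1) * ∑ p, ‖ξ 0 p‖ + N * θ * c * (β / (1 - β)) := by
          refine add_le_add_right (mul_le_mul_of_nonneg_left hgeo ?_) _
          positivity
      _ = θ * β ^ (k+1) * ∑ p, ‖ξ 0 p‖ + N * θ * c * β / (1 - β) := by ring
  · intro c' hc' hsum i
    set d : ℕ → ℝ := fun s => |c' s| with hd
    have hd0 : ∀ s, 0 ≤ d s := fun s => abs_nonneg _
    have hdsum : Summable d := hsum.abs
    have hc'd : ∀ (r : Fin N) (s : ℕ), 1 ≤ s → ‖ξ s r - ξ (s-1) r‖ ≤ d s :=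
      fun r s hs => (hc' r s hs).trans (le_abs_self _)
    have hb := bound d hc'd i
    set T : ℕ → ℝ := fun k => ∑ s ∈ Finset.Icc 1 k, d s * β ^ (k+1-s) with hT
    have hT0 : ∀ k, 0 ≤ T k := fun k => Finset.sum_nonneg fun s _ =>
      mul_nonneg (hd0 s) (pow_nonneg hβ0.le _)
    have h2 : Tendsto T atTop (nhds 0) := by
      rw [Metric.tendsto_atTop]
      intro ε hε
      obtain ⟨M, hM⟩ := Metric.tendsto_atTop.mp (tendsto_sum_nat_add d) (ε/2) (by positivity)
      have htail : ∑' j, d (j + (M+1)) < ε / 2 := by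
        have := hM (M+1) (by omega)
        rwa [Real.dist_eq, sub_zero, abs_of_nonneg (tsum_nonneg fun j => hd0 _)] at this
      set CM : ℝ := ∑ s ∈ Finset.Ioc 0 M, d s with hCM
      have hCM0 : 0 ≤ CM := Finset.sum_nonneg fun s _ => hd0 s
      have hpow : Tendsto (fun k : ℕ => β ^ (k+1-M) * CM) atTop (nhds 0) := by
        have h := ((tendsto_pow_atTop_nhds_zero_of_lt_one hβ0.le hβ1).comp
          ((tendsto_sub_atTop_nat M).comp (tendsto_add_atTop_nat 1))).mul_const CM
        simpa using h
      obtain ⟨K₁, hK₁⟩ := Metric.tendsto_atTop.mp hpow (ε/2) (by positivity)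
      refine ⟨max K₁ M, fun k hk => ?_⟩
      have hkK : K₁ ≤ k := le_trans (le_max_left _ _) hk
      have hkM : M ≤ k := le_trans (le_max_right _ _) hk
      rw [Real.dist_eq, sub_zero, abs_of_nonneg (hT0 k)]
      have hIoc : Finset.Icc 1 k = Finset.Ioc 0 k := Finset.Icc_add_one_left_eq_Ioc 0 k
      have hsplit : T k = (∑ s ∈ Finset.Ioc 0 M, d s * β ^ (k+1-s))
          + ∑ s ∈ Finset.Ioc M k, d s * β ^ (k+1-s) := by
        simp only [hT, hIoc]
        exact (Finset.sum_Ioc_consecutive _ (Nat.zero_le M) hkM).symm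
      have hA : (∑ s ∈ Finset.Ioc 0 M, d s * β ^ (k+1-s)) ≤ β ^ (k+1-M) * CM := by
        rw [hCM, Finset.mul_sum]
        refine Finset.sum_le_sum fun s hs => ?_
        rw [Finset.mem_Ioc] at hs
        rw [mul_comm (d s)]
        refine mul_le_mul_of_nonneg_right (pow_le_pow_of_le_one hβ0.le hβ1.le (by omega))
          (hd0 s)
      have hA' : β ^ (k+1-M) * CM < ε / 2 := by
        have := hK₁ k hkK
        rwa [Real.dist_eq, sub_zero,
          abs_of_nonneg (mul_nonneg (pow_nonneg hβ0.le _) hCM0)] at this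
      have hB : (∑ s ∈ Finset.Ioc M k, d s * β ^ (k+1-s)) ≤ ∑' j, d (j + (M+1)) := by
        calc (∑ s ∈ Finset.Ioc M k, d s * β ^ (k+1-s))
            ≤ ∑ s ∈ Finset.Ioc M k, d s := by
              refine Finset.sum_le_sum fun s hs => ?_
              have : β ^ (k+1-s) ≤ 1 := pow_le_one₀ hβ0.le hβ1.le
              calc d s * β ^ (k+1-s) ≤ d s * 1 := mul_le_mul_of_nonneg_left this (hd0 s)
                _ = d s := mul_one _
          _ = ∑ j ∈ Finset.range (k+1-(M+1)), d (M+1+j) := by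
              rw [← Finset.Ico_add_one_add_one_eq_Ioc, Finset.sum_Ico_eq_sum_range]
          _ ≤ ∑' j, d (j + (M+1)) := by
              have hs' : Summable (fun j => d (j + (M+1))) := (summable_nat_add_iff (M+1)).2 hdsum
              have : ∀ j ∈ Finset.range (k+1-(M+1)), d (M+1+j) = d (j + (M+1)) := by
                intro j _; rw [add_comm]
              rw [Finset.sum_congr rfl this]
              exact Summable.sum_le_tsum _ (fun j _ => hd0 _) hs'
      calc T k = _ + _ := hsplit
        _ ≤ β ^ (k+1-M) * CM + ∑' j, d (j + (M+1)) := add_le_add hA hB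
        _ < ε / 2 + ε / 2 := add_lt_add_of_lt_of_le hA' htail.le
        _ = ε := add_halves ε
    rw [tendsto_zero_iff_norm_tendsto_zero]
    refine squeeze_zero (fun k => norm_nonneg _) (fun k => hb k) ?_
    have h1 : Tendsto (fun k : ℕ => θ * β ^ (k+1) * ∑ p, ‖ξ 0 p‖) atTop (nhds 0) := by
      have h := (((tendsto_pow_atTop_nhds_zero_of_lt_one hβ0.le hβ1).comp
        (tendsto_add_atTop_nat 1)).const_mul θ).mul_const (∑ p, ‖ξ 0 p‖)
      simpa [Function.comp] using h
    have h3 : Tendsto (fun k => (N : ℝ) * θ * T k) atTop (nhds 0) := by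
      simpa using h2.const_mul ((N : ℝ) * θ)
    simpa using h1.add h3
end
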